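/- arXiv:math/0209044 — 6 statements merged into one kernel-verified Lean document; each statement's English description precedes it below -/
import Mathlib

section
/- For every real ρ > 0, the set V_ρ := {(u,v) ∈ ℝ⁴ × ℝ⁴ : Σ_{j=1}^4 u_j² = Σ_{j=1}^4 v_j² = ρ²/2 and Σ_{j=1}^4 u_j v_j = 0} (the intersection of the cone V with the sphere of radius ρ in ℝ⁸) is homeomorphic to S³ × S². -/
/-- `V_ρ`: the intersection of the real cone `V` with the sphere of radius `ρ` in `ℝ⁸`. -/
def Vrho (ρ : ℝ) : Set ((Fin 4 → ℝ) × (Fin 4 → ℝ)) :=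
  {uv | ∑ j, uv.1 j ^ 2 = ρ ^ 2 / 2 ∧ ∑ j, uv.2 j ^ 2 = ρ ^ 2 / 2 ∧
    ∑ j, uv.1 j * uv.2 j = 0}

/-!
Rescaled, `V_ρ` is the space of orthonormal pairs `(x, y)` in `ℝ⁴ = ℍ`. Left multiplication by
the unit quaternion `x̄` is an isometry sending `x` to `1`, so `(x, y) ↦ (x, x̄ y)` identifies this
space with `S³ × {z : ‖z‖ = 1, re z = 0}`, and the second factor is the unit sphere `S²` of the
imaginary quaternions.
-/

open scoped RealInnerProductSpace Quaternion

noncomputable section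

section OrthogonalPairs

variable {E F : Type*} [NormedAddCommGroup E] [InnerProductSpace ℝ E]
  [NormedAddCommGroup F] [InnerProductSpace ℝ F]

variable (E) in
def orthogonalPairs (r : ℝ) : Set (E × E) :=
  {p | ‖p.1‖ = r ∧ ‖p.2‖ = r ∧ ⟪p.1, p.2⟫ = 0}

def LinearIsometryEquiv.orthogonalPairsHomeomorph (e : E ≃ₗᵢ[ℝ] F) (r : ℝ) :
    orthogonalPairs E r ≃ₜ orthogonalPairs F r :=
  (e.toHomeomorph.prodCongr e.toHomeomorph).subtype fun p => by
    simp [orthogonalPairs]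

lemma smul_mem_orthogonalPairs_one_iff {r : ℝ} (hr : 0 < r) (p : E × E) :
    (r⁻¹ • p.1, r⁻¹ • p.2) ∈ orthogonalPairs E 1 ↔ p ∈ orthogonalPairs E r := by
  simp only [orthogonalPairs, Set.mem_ofPred_eq, norm_smul, real_inner_smul_left,
    real_inner_smul_right, norm_inv, Real.norm_of_nonneg hr.le, inv_mul_eq_one₀ hr.ne',
    mul_eq_zero, inv_eq_zero, hr.ne', false_or, eq_comm (a := r)]

def orthogonalPairsHomeomorphOne {r : ℝ} (hr : 0 < r) :
    orthogonalPairs E r ≃ₜ orthogonalPairs E 1 :=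
  let s := Homeomorph.smulOfNeZero r⁻¹ (inv_ne_zero hr.ne')
  (s.prodCongr s).subtype fun p => (smul_mem_orthogonalPairs_one_iff hr p).symm

end OrthogonalPairs

lemma EuclideanSpace.norm_toLp_eq_sqrt_iff {ι : Type*} [Fintype ι] (u : ι → ℝ) {c : ℝ}
    (hc : 0 ≤ c) : ‖WithLp.toLp 2 u‖ = √c ↔ ∑ i, u i ^ 2 = c := by
  rw [EuclideanSpace.norm_eq, Real.sqrt_inj (by positivity) hc]
  simp [sq_abs]

lemma EuclideanSpace.mem_unitSphere_fin_three_iff (a : EuclideanSpace ℝ (Fin 3)) :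
    a ∈ Metric.sphere 0 1 ↔ a 0 ^ 2 + a 1 ^ 2 + a 2 ^ 2 = 1 := by
  simp [EuclideanSpace.sphere_zero_eq 1 zero_le_one, Fin.sum_univ_three]

lemma mem_Vrho_iff (ρ : ℝ) (p : (Fin 4 → ℝ) × (Fin 4 → ℝ)) :
    p ∈ Vrho ρ ↔ (WithLp.toLp 2 p.1, WithLp.toLp 2 p.2) ∈
      orthogonalPairs (EuclideanSpace ℝ (Fin 4)) √(ρ ^ 2 / 2) := by
  have hc : 0 ≤ ρ ^ 2 / 2 := by positivity
  simp only [Vrho, orthogonalPairs, Set.mem_ofPred_eq, EuclideanSpace.norm_toLp_eq_sqrt_iff _ hc,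
    EuclideanSpace.inner_toLp_toLp, dotProduct, star_trivial, mul_comm]

def vrhoHomeomorphOrthogonalPairs (ρ : ℝ) :
    Vrho ρ ≃ₜ orthogonalPairs (EuclideanSpace ℝ (Fin 4)) √(ρ ^ 2 / 2) :=
  let e := (PiLp.homeomorph 2 fun _ : Fin 4 => ℝ).symm
  (e.prodCongr e).subtype (mem_Vrho_iff ρ)

namespace Quaternion

def unitPureSphere : Set ℍ := {z | ‖z‖ = 1 ∧ z.re = 0}

lemma norm_eq_one_iff_normSq_eq_one (z : ℍ) : ‖z‖ = 1 ↔ normSq z = 1 := by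
  rw [normSq_eq_norm_mul_self, mul_self_eq_one_iff, or_iff_left]
  linarith [norm_nonneg z]

lemma self_mul_star_of_norm_eq_one {x : ℍ} (hx : ‖x‖ = 1) : x * star x = 1 := by
  rw [self_mul_star, (norm_eq_one_iff_normSq_eq_one x).1 hx, coe_one]

lemma star_mul_self_of_norm_eq_one {x : ℍ} (hx : ‖x‖ = 1) : star x * x = 1 := by
  rw [star_mul_self, (norm_eq_one_iff_normSq_eq_one x).1 hx, coe_one]

lemma re_star_mul_eq_inner (x y : ℍ) : (star x * y).re = ⟪x, y⟫ := by
  simp only [inner_def, re_mul, re_star, imI_star, imJ_star, imK_star]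
  ring

lemma mem_unitPureSphere_iff (z : ℍ) :
    z ∈ unitPureSphere ↔ z.re = 0 ∧ z.imI ^ 2 + z.imJ ^ 2 + z.imK ^ 2 = 1 := by
  rw [unitPureSphere, Set.mem_ofPred_eq, norm_eq_one_iff_normSq_eq_one, normSq_def', and_comm]
  constructor <;> rintro ⟨h0, h1⟩ <;> simp_all

def unitPureSphereHomeomorph :
    unitPureSphere ≃ₜ Metric.sphere (0 : EuclideanSpace ℝ (Fin 3)) 1 where
  toFun z := ⟨!₂[z.1.imI, z.1.imJ, z.1.imK],
    (EuclideanSpace.mem_unitSphere_fin_three_iff _).2 ((mem_unitPureSphere_iff _).1 z.2).2⟩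
  invFun a := ⟨linearIsometryEquivTuple.symm !₂[0, a.1 0, a.1 1, a.1 2],
    (mem_unitPureSphere_iff _).2 ⟨rfl, (EuclideanSpace.mem_unitSphere_fin_three_iff _).1 a.2⟩⟩
  left_inv z := by
    ext
    · exact ((mem_unitPureSphere_iff _).1 z.2).1.symm
    all_goals rfl
  right_inv a := by
    ext i
    fin_cases i <;> rfl
  continuous_toFun := by
    have := continuous_imI; have := continuous_imJ; have := continuous_imK
    fun_prop
  continuous_invFun := by fun_prop

def sphereHomeomorphEuclideanSphere :
    Metric.sphere (0 : ℍ) 1 ≃ₜ Metric.sphere (0 : EuclideanSpace ℝ (Fin 4)) 1 :=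
  linearIsometryEquivTuple.toHomeomorph.subtype fun x => by
    simp only [mem_sphere_zero_iff_norm, LinearIsometryEquiv.coe_toHomeomorph,
      LinearIsometryEquiv.norm_map]

def orthogonalPairsHomeomorphSphereProd :
    orthogonalPairs ℍ 1 ≃ₜ Metric.sphere (0 : ℍ) 1 × unitPureSphere where
  toFun p := (⟨p.1.1, mem_sphere_zero_iff_norm.2 p.2.1⟩,
    ⟨star p.1.1 * p.1.2, by rw [norm_mul, norm_star, p.2.1, p.2.2.1, one_mul], by
      rw [re_star_mul_eq_inner, p.2.2.2]⟩)
  invFun q := ⟨(q.1.1, q.1.1 * q.2.1), mem_sphere_zero_iff_norm.1 q.1.2, by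
      rw [norm_mul, mem_sphere_zero_iff_norm.1 q.1.2, q.2.2.1, one_mul], by
      rw [← re_star_mul_eq_inner, ← mul_assoc,
        star_mul_self_of_norm_eq_one (mem_sphere_zero_iff_norm.1 q.1.2), one_mul, q.2.2.2]⟩
  left_inv p := Subtype.ext <| Prod.ext rfl <| by
    simp only [← mul_assoc, self_mul_star_of_norm_eq_one p.2.1, one_mul]
  right_inv q := Prod.ext rfl <| Subtype.ext <| by
    simp only [← mul_assoc, star_mul_self_of_norm_eq_one (mem_sphere_zero_iff_norm.1 q.1.2),
      one_mul]
  continuous_toFun := by fun_prop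
  continuous_invFun := by fun_prop

end Quaternion

end

theorem stmt1 (ρ : ℝ) (hρ : 0 < ρ) :
    Nonempty (↥(Vrho ρ) ≃ₜ
      (↥(Metric.sphere (0 : EuclideanSpace ℝ (Fin 4)) 1) ×
       ↥(Metric.sphere (0 : EuclideanSpace ℝ (Fin 3)) 1))) := by
  have hr : 0 < √(ρ ^ 2 / 2) := Real.sqrt_pos.2 (by positivity)
  exact ⟨(vrhoHomeomorphOrthogonalPairs ρ).trans <|
    (orthogonalPairsHomeomorphOne hr).trans <|
    (Quaternion.linearIsometryEquivTuple.symm.orthogonalPairsHomeomorph 1).trans <|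
    Quaternion.orthogonalPairsHomeomorphSphereProd.trans <|
    Quaternion.sphereHomeomorphEuclideanSphere.prodCongr Quaternion.unitPureSphereHomeomorph⟩
end

section
/- The complement of the origin in the cone, V ∖ {(0,0)}, is homeomorphic to (ℝ⁴ ∖ {0}) × S². (In particular, the punctured neighborhood of a threefold nodal singularity is the real cone over S³ × S².) -/
/-- The real cone `V = {(u,v) : Σ uⱼ² = Σ vⱼ², Σ uⱼvⱼ = 0}`. -/
def realCone : Set ((Fin 4 → ℝ) × (Fin 4 → ℝ)) :=
  {uv | ∑ j, uv.1 j ^ 2 = ∑ j, uv.2 j ^ 2 ∧ ∑ j, uv.1 j * uv.2 j = 0}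

/-!
Identify `ℝ⁴` with the quaternions `ℍ`. Then `Σ uⱼ² = |u|²` and `Σ uⱼvⱼ = Re (ū v)`, so for
`u ≠ 0` the pair `(u, v)` lies on `V` exactly when `w = u⁻¹ v` is a unit imaginary quaternion;
moreover `u = 0` forces `v = 0` on `V`. Hence `(u, v) ↦ (u, u⁻¹ v)` is a homeomorphism from
`V ∖ {0}` onto `(ℍ ∖ {0}) × S²`, the unit imaginary quaternions being the unit sphere of `ℝ³`.
-/

section LeftDivision

variable {D : Type*} [DivisionRing D] [TopologicalSpace D] [ContinuousMul D] [ContinuousInv₀ D]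

def Homeomorph.leftDivision (S : Set D) :
    {p : D × D // p.1 ≠ 0 ∧ p.1⁻¹ * p.2 ∈ S} ≃ₜ {u : D // u ≠ 0} × S where
  toFun p := (⟨p.1.1, p.2.1⟩, ⟨p.1.1⁻¹ * p.1.2, p.2.2⟩)
  invFun q := ⟨(q.1, q.1 * q.2), q.1.2, by simp [inv_mul_cancel_left₀ q.1.2]⟩
  left_inv p := by ext <;> simp [mul_inv_cancel_left₀ p.2.1]
  right_inv q := by ext <;> simp [inv_mul_cancel_left₀ q.1.2]
  continuous_toFun := by
    have : Continuous fun p : {p : D × D // p.1 ≠ 0 ∧ p.1⁻¹ * p.2 ∈ S} => p.1.1⁻¹ :=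
      (continuous_fst.comp continuous_subtype_val).inv₀ fun p => p.2.1
    fun_prop
  continuous_invFun := by fun_prop

end LeftDivision

open Quaternion

noncomputable def quatOfTuple : (Fin 4 → ℝ) ≃L[ℝ] ℍ :=
  LinearEquiv.toContinuousLinearEquiv (QuaternionAlgebra.linearEquivTuple (-1 : ℝ) 0 (-1)).symm

lemma sum_sq_eq_normSq_quatOfTuple (u : Fin 4 → ℝ) : ∑ j, u j ^ 2 = normSq (quatOfTuple u) := by
  rw [Fin.sum_univ_four, normSq_def']
  rfl

lemma sum_mul_eq_re_star_mul_quatOfTuple (u v : Fin 4 → ℝ) :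
    ∑ j, u j * v j = (star (quatOfTuple u) * quatOfTuple v).re := by
  rw [Fin.sum_univ_four, re_mul]
  simp only [re_star, imI_star, imJ_star, imK_star]
  change _ = u 0 * v 0 - -u 1 * v 1 - -u 2 * v 2 - -u 3 * v 3
  ring

def imaginaryUnitSphere : Set ℍ := {w | normSq w = 1 ∧ w.re = 0}

lemma inv_mul_mem_imaginaryUnitSphere_iff {u : ℍ} (hu : u ≠ 0) (v : ℍ) :
    u⁻¹ * v ∈ imaginaryUnitSphere ↔ normSq u = normSq v ∧ (star u * v).re = 0 := by
  have hnu : normSq u ≠ 0 := normSq_ne_zero.2 hu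
  have hre : (u⁻¹ * v).re = (normSq u)⁻¹ * (star u * v).re := by
    rw [inv_def, smul_mul_assoc, re_smul, smul_eq_mul]
  rw [imaginaryUnitSphere, Set.mem_ofPred_eq, hre, map_mul, normSq_inv, inv_mul_eq_one₀ hnu,
    mul_eq_zero, inv_eq_zero, or_iff_right hnu]

lemma prod_ne_zero_iff_fst_ne_zero_of_normSq_eq {u v : ℍ} (h : normSq u = normSq v) :
    (u, v) ≠ 0 ↔ u ≠ 0 := by
  refine ⟨fun huv hu => huv ?_, fun hu huv => hu (congrArg Prod.fst huv)⟩
  rw [hu, map_zero, eq_comm, normSq_eq_zero] at h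
  rw [hu, h]
  rfl

lemma mem_realCone_diff_zero_iff (x : (Fin 4 → ℝ) × (Fin 4 → ℝ)) :
    x ∈ realCone \ {0} ↔
      quatOfTuple x.1 ≠ 0 ∧ (quatOfTuple x.1)⁻¹ * quatOfTuple x.2 ∈ imaginaryUnitSphere := by
  have hzero : x ≠ 0 ↔ (quatOfTuple x.1, quatOfTuple x.2) ≠ 0 := by
    simp [Prod.ext_iff]
  rw [Set.mem_sdiff, Set.mem_singleton_iff, ← ne_eq, hzero]
  simp only [realCone, Set.mem_ofPred_eq, sum_sq_eq_normSq_quatOfTuple,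
    sum_mul_eq_re_star_mul_quatOfTuple]
  constructor
  · rintro ⟨hcone, hne⟩
    have hu := (prod_ne_zero_iff_fst_ne_zero_of_normSq_eq hcone.1).1 hne
    exact ⟨hu, (inv_mul_mem_imaginaryUnitSphere_iff hu _).2 hcone⟩
  · rintro ⟨hu, hw⟩
    have hcone := (inv_mul_mem_imaginaryUnitSphere_iff hu _).1 hw
    exact ⟨hcone, (prod_ne_zero_iff_fst_ne_zero_of_normSq_eq hcone.1).2 hu⟩

lemma mem_sphere_zero_one_iff_sum_sq (s : EuclideanSpace ℝ (Fin 3)) :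
    s ∈ Metric.sphere 0 1 ↔ s 0 ^ 2 + s 1 ^ 2 + s 2 ^ 2 = 1 := by
  rw [mem_sphere_zero_iff_norm, EuclideanSpace.norm_eq, Fin.sum_univ_three]
  simp only [Real.norm_eq_abs, sq_abs]
  exact Real.sqrt_eq_one

noncomputable def imaginaryUnitSphereHomeomorph :
    imaginaryUnitSphere ≃ₜ Metric.sphere (0 : EuclideanSpace ℝ (Fin 3)) 1 where
  toFun w := ⟨!₂[w.1.imI, w.1.imJ, w.1.imK], by
    rw [mem_sphere_zero_one_iff_sum_sq]
    obtain ⟨hnormSq, hre⟩ := w.2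
    rw [normSq_def', hre] at hnormSq
    simpa using hnormSq⟩
  invFun s := ⟨quatOfTuple ![0, s.1 0, s.1 1, s.1 2], by
    have hs := (mem_sphere_zero_one_iff_sum_sq s.1).1 s.2
    refine ⟨?_, rfl⟩
    rw [normSq_def']
    change 0 ^ 2 + s.1 0 ^ 2 + s.1 1 ^ 2 + s.1 2 ^ 2 = 1
    simpa using hs⟩
  left_inv w := by
    ext
    exacts [w.2.2.symm, rfl, rfl, rfl]
  right_inv s := by
    ext i
    fin_cases i <;> rfl
  continuous_toFun := by
    have := continuous_imI
    have := continuous_imJ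
    have := continuous_imK
    fun_prop
  continuous_invFun := by fun_prop

theorem stmt3 :
    Nonempty (↥(realCone \ {0}) ≃ₜ
      (↥{u : Fin 4 → ℝ | u ≠ 0} ×
       ↥(Metric.sphere (0 : EuclideanSpace ℝ (Fin 3)) 1))) := by
  let e := quatOfTuple.toHomeomorph
  let nonzeroHomeomorph : {u : ℍ // u ≠ 0} ≃ₜ {u : Fin 4 → ℝ | u ≠ 0} :=
    e.symm.subtype fun _ => quatOfTuple.symm.map_ne_zero_iff.symm
  exact ⟨((e.prodCongr e).subtype mem_realCone_diff_zero_iff).trans <|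
    (Homeomorph.leftDivision imaginaryUnitSphere).trans <|
      nonzeroHomeomorph.prodCongr imaginaryUnitSphereHomeomorph⟩
end

section
/- For every ℓ ∈ ℙ¹(ℂ), the fiber {z ∈ ℂ⁴ : (z, ℓ) ∈ U} of the projection U → ℙ¹(ℂ) is a ℂ-linear subspace of ℂ⁴ of complex dimension 2. (Thus the small resolution U is the total space of a rank-2 complex vector bundle over ℙ¹.) -/
open scoped LinearAlgebra.Projectivization

/-- The small resolution `U ⊂ ℂ⁴ × ℙ¹(ℂ)` of the threefold node, cut out by
`y₀z₄ − y₁z₃ = 0` and `y₀z₁ + y₁z₂ = 0` for every nonzero representative `(y₀,y₁)`. -/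
def smallRes : Set ((Fin 4 → ℂ) × ℙ ℂ (Fin 2 → ℂ)) :=
  {p | ∀ (y : Fin 2 → ℂ) (hy : y ≠ 0), Projectivization.mk ℂ y hy = p.2 →
    y 0 * p.1 3 - y 1 * p.1 2 = 0 ∧ y 0 * p.1 0 + y 1 * p.1 1 = 0}

/-! Both equations are homogeneous of degree one in `y`, so the fiber of `U` over `ℓ` is the
kernel of the linear map `K⁴ → K²` they define for any one representative `y` of `ℓ`. That map
is surjective as soon as `y ≠ 0`, so by rank–nullity its kernel has dimension `4 - 2`. -/

namespace SmallRes

variable {K : Type*} [Field K]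

def fiberMap (y : Fin 2 → K) : (Fin 4 → K) →ₗ[K] K × K :=
  LinearMap.prod (y 0 • LinearMap.proj 3 - y 1 • LinearMap.proj 2)
    (y 0 • LinearMap.proj 0 + y 1 • LinearMap.proj 1)

theorem fiberMap_apply (y : Fin 2 → K) (z : Fin 4 → K) :
    fiberMap y z = (y 0 * z 3 - y 1 * z 2, y 0 * z 0 + y 1 * z 1) :=
  rfl

theorem fiberMap_smul (c : K) (y : Fin 2 → K) (z : Fin 4 → K) :
    fiberMap (c • y) z = c • fiberMap y z := by
  simp only [fiberMap_apply, Pi.smul_apply, smul_eq_mul, Prod.smul_mk]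
  exact Prod.ext (by ring) (by ring)

theorem fiberMap_surjective {y : Fin 2 → K} (hy : y ≠ 0) :
    Function.Surjective (fiberMap y) := by
  rintro ⟨a, b⟩
  rcases eq_or_ne (y 0) 0 with h0 | h0
  · have h1 : y 1 ≠ 0 := fun h1 => hy <| funext fun i => by fin_cases i <;> assumption
    refine ⟨![0, b / y 1, -(a / y 1), 0], ?_⟩
    simp only [fiberMap_apply, Prod.mk.injEq]
    constructor <;> simp [h0] <;> field_simp
  · refine ⟨![b / y 0, 0, 0, a / y 0], ?_⟩
    simp only [fiberMap_apply, Prod.mk.injEq]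
    constructor <;> simp <;> field_simp

theorem finrank_ker_fiberMap {y : Fin 2 → K} (hy : y ≠ 0) :
    Module.finrank K (LinearMap.ker (fiberMap y)) = 2 := by
  have h := LinearMap.finrank_range_add_finrank_ker (fiberMap y)
  rw [LinearMap.range_eq_top.mpr (fiberMap_surjective hy), finrank_top] at h
  simp only [Module.finrank_prod, Module.finrank_self, Module.finrank_fin_fun] at h
  omega

end SmallRes

open SmallRes in
theorem mem_smallRes_iff {y : Fin 2 → ℂ} (hy : y ≠ 0) (z : Fin 4 → ℂ) :
    (z, Projectivization.mk ℂ y hy) ∈ smallRes ↔ fiberMap y z = 0 := by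
  constructor
  · intro h
    simpa [fiberMap_apply] using h y hy rfl
  · rintro hz y' hy' hmk
    obtain ⟨c, rfl⟩ := (Projectivization.mk_eq_mk_iff ℂ _ _ hy' hy).mp hmk
    have : fiberMap ((c : ℂ) • y) z = 0 := by rw [fiberMap_smul, hz, smul_zero]
    simpa [fiberMap_apply, Units.smul_def] using this

theorem stmt4 (ℓ : ℙ ℂ (Fin 2 → ℂ)) :
    ∃ W : Submodule ℂ (Fin 4 → ℂ),
      (W : Set (Fin 4 → ℂ)) = {z : Fin 4 → ℂ | (z, ℓ) ∈ smallRes} ∧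
      Module.finrank ℂ ↥W = 2 := by
  refine ⟨LinearMap.ker (SmallRes.fiberMap ℓ.rep), ?_,
    SmallRes.finrank_ker_fiberMap ℓ.rep_nonzero⟩
  ext z
  conv_rhs => rw [Set.mem_ofPred_eq, ← ℓ.mk_rep, mem_smallRes_iff ℓ.rep_nonzero]
  rfl
end

section
/- The small resolution U of the threefold node is homeomorphic to ℂ² × ℙ¹(ℂ) (equivalently, to ℝ⁴ × S²): the total space of the bundle O(−1) ⊕ O(−1) over ℙ¹ is topologically trivial. -/
open scoped LinearAlgebra.Projectivization

/-- The quotient topology on `ℙ¹(ℂ)`, induced from `ℂ² \ {0}`. -/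
instance : TopologicalSpace (ℙ ℂ (Fin 2 → ℂ)) :=
  inferInstanceAs (TopologicalSpace (Quotient (projectivizationSetoid ℂ (Fin 2 → ℂ))))

/-!
Over a line `ℓ = [y]` the fibre of `U` consists of the points `(s y₁, -s y₀, t y₀, t y₁)`, so `U`
is the bundle `O(-1) ⊕ O(-1)`. The map `z ↦ (z₄ - z̄₂, z̄₃ - z₁)`, which does not involve `ℓ`,
sends such a point to `w = ȳ₀ (s̄, t̄) + y₁ (t, -s)`, an `ℝ`-linear function of `(s, t)` with
`|w|² = |y|² (|s|² + |t|²)`, hence bijective on every fibre. Its inverse, written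
on a representative `y` with a division by `|y|²`, is invariant under rescaling `y`; it is
continuous on `ℂ² × ℙ¹` because `ℂ² ∖ 0 → ℙ¹` is an open quotient map, so that continuity can be
tested on representatives.
-/

open ComplexConjugate

namespace Projectivization

section Topology

variable {K V : Type*} [DivisionRing K] [AddCommGroup V] [Module K V] [TopologicalSpace V]
  [ContinuousConstSMul K V]

local instance : TopologicalSpace (ℙ K V) :=
  inferInstanceAs (TopologicalSpace (Quotient (projectivizationSetoid K V)))

theorem isOpenQuotientMap_mk' : IsOpenQuotientMap (mk' K : {v : V // v ≠ 0} → ℙ K V) := by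
  refine ⟨Quotient.mk''_surjective, continuous_quot_mk, fun U hU => ?_⟩
  change IsOpen (mk' K ⁻¹' (mk' K '' U))
  have hsat : mk' K ⁻¹' (mk' K '' U) =
      ⋃ c : Kˣ, (fun v : {v : V // v ≠ 0} =>
        (⟨c • v.1, smul_ne_zero c.ne_zero v.2⟩ : {v : V // v ≠ 0})) ⁻¹' U := by
    ext v
    simp only [Set.mem_preimage, Set.mem_image, Set.mem_iUnion]
    constructor
    · rintro ⟨u, hu, huv⟩
      obtain ⟨c, hc⟩ := (mk_eq_mk_iff K _ _ u.2 v.2).mp huv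
      obtain rfl : u = ⟨c • v.1, smul_ne_zero c.ne_zero v.2⟩ := Subtype.ext hc.symm
      exact ⟨c, hu⟩
    · rintro ⟨c, hc⟩
      exact ⟨_, hc, (mk_eq_mk_iff K _ _ _ v.2).mpr ⟨c, rfl⟩⟩
  rw [hsat]
  exact isOpen_iUnion fun c => hU.preimage ((continuous_subtype_val.const_smul _).subtype_mk _)

theorem continuous_of_continuous_mk' {X Y : Type*} [TopologicalSpace X] [TopologicalSpace Y]
    {g : X × ℙ K V → Y} (hg : Continuous fun p : X × {v : V // v ≠ 0} => g (p.1, mk' K p.2)) :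
    Continuous g :=
  (IsOpenQuotientMap.id.prodMap isOpenQuotientMap_mk').continuous_comp_iff.mp hg

end Topology

end Projectivization

namespace SmallResolution

open Complex

def fibrePoint (y : Fin 2 → ℂ) (s t : ℂ) : Fin 4 → ℂ :=
  ![s * y 1, -(s * y 0), t * y 0, t * y 1]

def trivCoord (z : Fin 4 → ℂ) : Fin 2 → ℂ :=
  ![z 3 - conj (z 1), conj (z 2) - z 0]

def sqNorm (y : Fin 2 → ℂ) : ℝ := normSq (y 0) + normSq (y 1)

noncomputable def trivCoordInv (y w : Fin 2 → ℂ) : Fin 4 → ℂ :=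
  fibrePoint y ((conj (y 0) * conj (w 0) - conj (y 1) * w 1) / sqNorm y)
    ((conj (y 0) * conj (w 1) + conj (y 1) * w 0) / sqNorm y)

theorem ne_zero_or_ne_zero_of_ne_zero {y : Fin 2 → ℂ} (hy : y ≠ 0) : y 0 ≠ 0 ∨ y 1 ≠ 0 := by
  contrapose! hy
  ext i
  fin_cases i <;> simp [hy]

theorem ofReal_sqNorm_ne_zero {y : Fin 2 → ℂ} (hy : y ≠ 0) : (sqNorm y : ℂ) ≠ 0 := by
  refine ofReal_ne_zero.mpr (ne_of_gt ?_)
  rcases ne_zero_or_ne_zero_of_ne_zero hy with h | h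
  · exact add_pos_of_pos_of_nonneg (normSq_pos.mpr h) (normSq_nonneg _)
  · exact add_pos_of_nonneg_of_pos (normSq_nonneg _) (normSq_pos.mpr h)

theorem ofReal_sqNorm (y : Fin 2 → ℂ) :
    (sqNorm y : ℂ) = conj (y 0) * y 0 + conj (y 1) * y 1 := by
  simp [sqNorm, normSq_eq_conj_mul_self]

theorem exists_eq_fibrePoint {y : Fin 2 → ℂ} (hy : y ≠ 0) {z : Fin 4 → ℂ}
    (h₁ : y 0 * z 3 - y 1 * z 2 = 0) (h₀ : y 0 * z 0 + y 1 * z 1 = 0) :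
    ∃ s t, z = fibrePoint y s t := by
  rcases ne_zero_or_ne_zero_of_ne_zero hy with h | h
  · refine ⟨-z 1 / y 0, z 2 / y 0, funext fun i => ?_⟩
    fin_cases i <;>
      simp only [fibrePoint, Fin.isValue, Fin.zero_eta, Fin.mk_one, Fin.reduceFinMk,
        Matrix.cons_val, Matrix.cons_val_zero, Matrix.cons_val_one] <;>
      field_simp
    · linear_combination h₀
    · linear_combination h₁
  · refine ⟨z 0 / y 1, z 3 / y 1, funext fun i => ?_⟩
    fin_cases i <;>
      simp only [fibrePoint, Fin.isValue, Fin.zero_eta, Fin.mk_one, Fin.reduceFinMk,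
        Matrix.cons_val, Matrix.cons_val_zero, Matrix.cons_val_one] <;>
      field_simp
    · linear_combination h₀
    · linear_combination -h₁

theorem mk_mem_smallRes_iff {y : Fin 2 → ℂ} (hy : y ≠ 0) {z : Fin 4 → ℂ} :
    (z, Projectivization.mk ℂ y hy) ∈ smallRes ↔ ∃ s t, z = fibrePoint y s t := by
  constructor
  · intro h
    obtain ⟨h₁, h₀⟩ := h y hy rfl
    exact exists_eq_fibrePoint hy h₁ h₀
  · rintro ⟨s, t, rfl⟩ y' hy' hyy'
    obtain ⟨c, rfl⟩ := (Projectivization.mk_eq_mk_iff ℂ _ _ hy' hy).mp hyy'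
    simp only [fibrePoint, Units.smul_def, Pi.smul_apply, smul_eq_mul, Fin.isValue,
      Matrix.cons_val, Matrix.cons_val_zero, Matrix.cons_val_one]
    constructor <;> ring

theorem trivCoord_fibrePoint (y : Fin 2 → ℂ) (s t : ℂ) :
    trivCoord (fibrePoint y s t) =
      ![conj (y 0) * conj s + y 1 * t, conj (y 0) * conj t - y 1 * s] := by
  ext i
  fin_cases i <;>
  · simp only [trivCoord, fibrePoint, Fin.isValue, Fin.zero_eta, Fin.mk_one, Matrix.cons_val,
      Matrix.cons_val_zero, Matrix.cons_val_one, map_neg, map_mul]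
    ring

theorem trivCoordInv_trivCoord {y : Fin 2 → ℂ} (hy : y ≠ 0) (s t : ℂ) :
    trivCoordInv y (trivCoord (fibrePoint y s t)) = fibrePoint y s t := by
  rw [trivCoordInv, trivCoord_fibrePoint]
  congr 1 <;>
  · simp only [Fin.isValue, Matrix.cons_val_zero, Matrix.cons_val_one, map_add, map_sub, map_mul,
      conj_conj]
    rw [div_eq_iff (ofReal_sqNorm_ne_zero hy), ofReal_sqNorm]
    ring

theorem trivCoord_trivCoordInv {y : Fin 2 → ℂ} (hy : y ≠ 0) (w : Fin 2 → ℂ) :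
    trivCoord (trivCoordInv y w) = w := by
  have hN := ofReal_sqNorm_ne_zero hy
  rw [trivCoordInv, trivCoord_fibrePoint]
  ext i
  fin_cases i <;>
  · simp only [Fin.isValue, Fin.zero_eta, Fin.mk_one, Matrix.cons_val_zero, Matrix.cons_val_one,
      map_div₀, map_add, map_sub, map_mul, conj_conj, conj_ofReal]
    field_simp
    rw [ofReal_sqNorm]
    ring

theorem trivCoordInv_smul {y : Fin 2 → ℂ} (hy : y ≠ 0) {c : ℂ} (hc : c ≠ 0) (w : Fin 2 → ℂ) :
    trivCoordInv (c • y) w = trivCoordInv y w := by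
  have hN := ofReal_sqNorm_ne_zero hy
  have hcc : conj c ≠ 0 := (map_ne_zero _).mpr hc
  have hN' : (sqNorm (c • y) : ℂ) = conj c * c * sqNorm y := by
    simp only [ofReal_sqNorm, Pi.smul_apply, smul_eq_mul, map_mul]
    ring
  ext i
  fin_cases i <;>
  · simp only [trivCoordInv, fibrePoint, Fin.isValue, Fin.zero_eta, Fin.mk_one, Fin.reduceFinMk,
      Matrix.cons_val, Matrix.cons_val_zero, Matrix.cons_val_one, Pi.smul_apply, smul_eq_mul,
      map_mul, hN']
    field_simp

noncomputable def trivCoordInvLift (q : (Fin 2 → ℂ) × ℙ ℂ (Fin 2 → ℂ)) : Fin 4 → ℂ :=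
  Projectivization.lift (fun y => trivCoordInv y.1 q.1)
    (by
      rintro ⟨_, ha⟩ ⟨b, hb⟩ c rfl
      exact trivCoordInv_smul hb (left_ne_zero_of_smul ha) q.1)
    q.2

theorem continuousOn_trivCoordInv :
    ContinuousOn (fun p : (Fin 2 → ℂ) × (Fin 2 → ℂ) => trivCoordInv p.1 p.2) {p | p.1 ≠ 0} := by
  have hN : ∀ p ∈ {p : (Fin 2 → ℂ) × (Fin 2 → ℂ) | p.1 ≠ 0}, (sqNorm p.1 : ℂ) ≠ 0 :=
    fun _ => ofReal_sqNorm_ne_zero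
  refine continuousOn_pi.mpr fun i => ?_
  fin_cases i <;>
  · simp only [trivCoordInv, fibrePoint, sqNorm]
    fun_prop (disch := exact hN)

theorem continuous_trivCoordInvLift : Continuous trivCoordInvLift :=
  Projectivization.continuous_of_continuous_mk' <| continuousOn_trivCoordInv.comp_continuous
    (f := fun q : (Fin 2 → ℂ) × {y : Fin 2 → ℂ // y ≠ 0} => (q.2.1, q.1)) (by fun_prop)
    fun q => q.2.2

theorem trivCoordInvLift_mem (q : (Fin 2 → ℂ) × ℙ ℂ (Fin 2 → ℂ)) :
    (trivCoordInvLift q, q.2) ∈ smallRes := by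
  obtain ⟨w, ℓ⟩ := q
  induction ℓ using Projectivization.ind with
  | h y hy => exact (mk_mem_smallRes_iff hy).mpr ⟨_, _, rfl⟩

noncomputable def smallResHomeomorph : smallRes ≃ₜ (Fin 2 → ℂ) × ℙ ℂ (Fin 2 → ℂ) where
  toFun p := (trivCoord p.1.1, p.1.2)
  invFun q := ⟨(trivCoordInvLift q, q.2), trivCoordInvLift_mem q⟩
  left_inv := by
    rintro ⟨⟨z, ℓ⟩, hp⟩
    induction ℓ using Projectivization.ind with
    | h y hy =>
      obtain ⟨s, t, rfl⟩ := (mk_mem_smallRes_iff hy).mp hp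
      exact Subtype.ext (Prod.ext (trivCoordInv_trivCoord hy s t) rfl)
  right_inv := by
    rintro ⟨w, ℓ⟩
    induction ℓ using Projectivization.ind with
    | h y hy => exact Prod.ext (trivCoord_trivCoordInv hy w) rfl
  continuous_toFun := by unfold trivCoord; fun_prop
  continuous_invFun :=
    (continuous_trivCoordInvLift.prodMk continuous_snd).subtype_mk _

end SmallResolution

open SmallResolution in
/-- The small resolution of the threefold node (the total space of
`O(−1) ⊕ O(−1)` over `ℙ¹`) is homeomorphic to `ℂ² × ℙ¹(ℂ)`. -/
theorem stmt6 :
    Nonempty (↥smallRes ≃ₜ ((Fin 2 → ℂ) × ℙ ℂ (Fin 2 → ℂ))) :=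
  ⟨smallResHomeomorph⟩
end

section
/- Let A : ℝ⁷ → ℝ⁷ be a linear map such that φ₀(Au, Av, Aw) = φ₀(u, v, w) for all u, v, w ∈ ℝ⁷. Then A also preserves the 4-form ψ₀ = *φ₀, i.e. ψ₀(Au, Av, Aw, Ax) = ψ₀(u, v, w, x) for all u, v, w, x ∈ ℝ⁷, where ψ₀ := e⁴⁵⁶⁷ + e²³⁶⁷ + e²³⁴⁵ + e¹³⁵⁷ − e¹³⁴⁶ − e¹²⁵⁶ − e¹²⁴⁷. -/
/-!
Bryant's formula: for any 3-form `φ` the 7-form `(u ⌟ φ) ∧ (v ⌟ φ) ∧ φ` is built from `φ` alone,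
so a linear map `A` preserving `φ` satisfies `det A · B(Au, Av) = B(u, v)`, where `B(u, v)` is the
value of that 7-form on the standard basis. For `φ₀` one computes `B(u, v) = 6 ⟨u, v⟩`, hence
`det A · ⟨Au, Av⟩ = ⟨u, v⟩` and `A` is injective. The cross product `⟨u × v, w⟩ = φ₀(u, v, w)`
then satisfies `Au × Av = det A · A(u × v)`, and Lagrange's identity
`|u × v|² = |u|² |v|² - ⟨u, v⟩²` applied to `Ae₁, Ae₂` forces `(det A)³ = 1`. So `A` is
orthogonal and commutes with `×`, and it preserves
`ψ₀(u, v, w, x) = ⟨u × v, w × x⟩ - ⟨u, w⟩ ⟨v, x⟩ + ⟨u, x⟩ ⟨v, w⟩`.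
-/

/-- `e^{ijk}(u,v,w)`: the `3×3` minor determinant of the `(i,j,k)` coordinates. -/
def e3 (i j k : Fin 7) (u v w : Fin 7 → ℝ) : ℝ :=
  Matrix.det !![u i, u j, u k; v i, v j, v k; w i, w j, w k]

/-- The standard `G₂` 3-form
`φ₀ = e¹²³ + e¹⁴⁵ + e¹⁶⁷ + e²⁴⁶ − e²⁵⁷ − e³⁴⁷ − e³⁵⁶` (0-indexed). -/
def phi0 (u v w : Fin 7 → ℝ) : ℝ :=
  e3 0 1 2 u v w + e3 0 3 4 u v w + e3 0 5 6 u v w + e3 1 3 5 u v w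
    - e3 1 4 6 u v w - e3 2 3 6 u v w - e3 2 4 5 u v w

/-- `e^{ijkl}(u,v,w,x)`: the `4×4` minor determinant of the `(i,j,k,l)` coordinates. -/
def e4 (i j k l : Fin 7) (u v w x : Fin 7 → ℝ) : ℝ :=
  Matrix.det !![u i, u j, u k, u l; v i, v j, v k, v l;
                w i, w j, w k, w l; x i, x j, x k, x l]

/-- The 4-form `ψ₀ = *φ₀ = e⁴⁵⁶⁷ + e²³⁶⁷ + e²³⁴⁵ + e¹³⁵⁷ − e¹³⁴⁶ − e¹²⁵⁶ − e¹²⁴⁷`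
(0-indexed). -/
def psi0 (u v w x : Fin 7 → ℝ) : ℝ :=
  e4 3 4 5 6 u v w x + e4 1 2 5 6 u v w x + e4 1 2 3 4 u v w x
    + e4 0 2 4 6 u v w x - e4 0 2 3 5 u v w x - e4 0 1 4 5 u v w x
    - e4 0 1 3 6 u v w x

open Equiv Matrix

section AdjacentSwap

variable {M N : Type*} [AddCommGroup N] {n : ℕ} {g : (Fin (n + 1) → M) → N}
  (hg : ∀ c (i : Fin n), g (c ∘ swap i.castSucc i.succ) = -g c)
include hg

theorem comp_perm_eq_sign_smul_of_comp_swap (σ : Perm (Fin (n + 1))) (c : Fin (n + 1) → M) :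
    g (c ∘ σ) = Perm.sign σ • g c := by
  have hσ : σ ∈ Submonoid.closure (Set.range fun i : Fin n ↦ swap i.castSucc i.succ) := by
    rw [Perm.mclosure_swap_castSucc_succ]; exact Submonoid.mem_top σ
  induction hσ using Submonoid.closure_induction generalizing c with
  | mem _ h =>
    obtain ⟨i, rfl⟩ := h
    rw [hg, Perm.sign_swap (Fin.castSucc_lt_succ (i := i)).ne, Units.neg_smul, one_smul]
  | one => simp
  | mul σ τ _ _ hσ hτ =>
    rw [Perm.coe_mul, ← Function.comp_assoc, hτ, hσ, Perm.sign_mul, mul_comm, mul_smul]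

theorem eq_zero_of_comp_swap [IsAddTorsionFree N] {c : Fin (n + 1) → M} {i j : Fin (n + 1)}
    (hc : c i = c j) (hij : i ≠ j) : g c = 0 := by
  have h := comp_perm_eq_sign_smul_of_comp_swap hg (swap i j) c
  have hcσ : c ∘ swap i j = c := funext (apply_swap_eq_self hc)
  rwa [hcσ, Perm.sign_swap hij, Units.neg_smul, one_smul, self_eq_neg] at h

theorem update_eq_sign_smul_update_zero (c : Fin (n + 1) → M) (i : Fin (n + 1)) (x : M) :
    g (Function.update c i x) =
      Perm.sign (swap 0 i) • g (Function.update (c ∘ swap 0 i) 0 x) := by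
  have h := comp_perm_eq_sign_smul_of_comp_swap hg (swap 0 i) (Function.update c i x)
  rw [Function.update_comp_equiv, symm_swap, swap_apply_right] at h
  rw [h, smul_smul, Int.units_mul_self, one_smul]

end AdjacentSwap

def AlternatingMap.ofComp_swap {R M N : Type*} [Semiring R] [AddCommMonoid M] [Module R M]
    [AddCommGroup N] [Module R N] [IsAddTorsionFree N] {n : ℕ} (g : (Fin (n + 1) → M) → N)
    (hadd : ∀ c x y, g (Function.update c 0 (x + y)) =
      g (Function.update c 0 x) + g (Function.update c 0 y))
    (hsmul : ∀ c (r : R) x, g (Function.update c 0 (r • x)) = r • g (Function.update c 0 x))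
    (hg : ∀ c (i : Fin n), g (c ∘ swap i.castSucc i.succ) = -g c) :
    M [⋀^Fin (n + 1)]→ₗ[R] N where
  toFun := g
  map_update_add' := by
    intro _ c i x y
    obtain rfl : ‹DecidableEq (Fin (n + 1))› = instDecidableEqFin _ := Subsingleton.elim _ _
    simp only [update_eq_sign_smul_update_zero hg c i, hadd, smul_add]
  map_update_smul' := by
    intro _ c i r x
    obtain rfl : ‹DecidableEq (Fin (n + 1))› = instDecidableEqFin _ := Subsingleton.elim _ _
    simp only [update_eq_sign_smul_update_zero hg c i, hsmul, smul_comm _ r]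
  map_eq_zero_of_eq' _ _ _ := eq_zero_of_comp_swap hg

theorem AlternatingMap.map_linearMap_comp_basis {R M ι : Type*} [CommRing R] [AddCommGroup M]
    [Module R M] [Fintype ι] [DecidableEq ι] (ω : M [⋀^ι]→ₗ[R] R) (e : Module.Basis ι R M)
    (f : M →ₗ[R] M) : ω (f ∘ e) = LinearMap.det f * ω e := by
  conv_lhs => rw [ω.eq_smul_basis_det e]
  rw [AlternatingMap.smul_apply, Module.Basis.det_comp, Module.Basis.det_self, smul_eq_mul,
    mul_one, mul_comm]

section Wedge

variable {R V : Type*} [CommRing R]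

/-- The shuffle formula for the wedge product of two 2-forms. -/
def wedge22 (ω η : V → V → R) (x y z w : V) : R :=
  ω x y * η z w - ω x z * η y w + ω x w * η y z
    + ω y z * η x w - ω y w * η x z + ω z w * η x y

/-- The shuffle formula for the wedge product of a 4-form and a 3-form. -/
def wedge43 (α : V → V → V → V → R) (β : V → V → V → R) (c : Fin 7 → V) : R :=
  α (c 0) (c 1) (c 2) (c 3) * β (c 4) (c 5) (c 6)
    - α (c 0) (c 1) (c 2) (c 4) * β (c 3) (c 5) (c 6)
    + α (c 0) (c 1) (c 2) (c 5) * β (c 3) (c 4) (c 6)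
    - α (c 0) (c 1) (c 2) (c 6) * β (c 3) (c 4) (c 5)
    + α (c 0) (c 1) (c 3) (c 4) * β (c 2) (c 5) (c 6)
    - α (c 0) (c 1) (c 3) (c 5) * β (c 2) (c 4) (c 6)
    + α (c 0) (c 1) (c 3) (c 6) * β (c 2) (c 4) (c 5)
    + α (c 0) (c 1) (c 4) (c 5) * β (c 2) (c 3) (c 6)
    - α (c 0) (c 1) (c 4) (c 6) * β (c 2) (c 3) (c 5)
    + α (c 0) (c 1) (c 5) (c 6) * β (c 2) (c 3) (c 4)
    - α (c 0) (c 2) (c 3) (c 4) * β (c 1) (c 5) (c 6)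
    + α (c 0) (c 2) (c 3) (c 5) * β (c 1) (c 4) (c 6)
    - α (c 0) (c 2) (c 3) (c 6) * β (c 1) (c 4) (c 5)
    - α (c 0) (c 2) (c 4) (c 5) * β (c 1) (c 3) (c 6)
    + α (c 0) (c 2) (c 4) (c 6) * β (c 1) (c 3) (c 5)
    - α (c 0) (c 2) (c 5) (c 6) * β (c 1) (c 3) (c 4)
    + α (c 0) (c 3) (c 4) (c 5) * β (c 1) (c 2) (c 6)
    - α (c 0) (c 3) (c 4) (c 6) * β (c 1) (c 2) (c 5)
    + α (c 0) (c 3) (c 5) (c 6) * β (c 1) (c 2) (c 4)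
    - α (c 0) (c 4) (c 5) (c 6) * β (c 1) (c 2) (c 3)
    + α (c 1) (c 2) (c 3) (c 4) * β (c 0) (c 5) (c 6)
    - α (c 1) (c 2) (c 3) (c 5) * β (c 0) (c 4) (c 6)
    + α (c 1) (c 2) (c 3) (c 6) * β (c 0) (c 4) (c 5)
    + α (c 1) (c 2) (c 4) (c 5) * β (c 0) (c 3) (c 6)
    - α (c 1) (c 2) (c 4) (c 6) * β (c 0) (c 3) (c 5)
    + α (c 1) (c 2) (c 5) (c 6) * β (c 0) (c 3) (c 4)
    - α (c 1) (c 3) (c 4) (c 5) * β (c 0) (c 2) (c 6)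
    + α (c 1) (c 3) (c 4) (c 6) * β (c 0) (c 2) (c 5)
    - α (c 1) (c 3) (c 5) (c 6) * β (c 0) (c 2) (c 4)
    + α (c 1) (c 4) (c 5) (c 6) * β (c 0) (c 2) (c 3)
    + α (c 2) (c 3) (c 4) (c 5) * β (c 0) (c 1) (c 6)
    - α (c 2) (c 3) (c 4) (c 6) * β (c 0) (c 1) (c 5)
    + α (c 2) (c 3) (c 5) (c 6) * β (c 0) (c 1) (c 4)
    - α (c 2) (c 4) (c 5) (c 6) * β (c 0) (c 1) (c 3)
    + α (c 3) (c 4) (c 5) (c 6) * β (c 0) (c 1) (c 2)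

section

variable {ω η : V → V → R} (hω : ∀ x y, ω y x = -ω x y) (hη : ∀ x y, η y x = -η x y)
include hω hη

theorem wedge22_anticomm₁₂ (x y z w : V) : wedge22 ω η y x z w = -wedge22 ω η x y z w := by
  rw [wedge22, wedge22, hω x y, hη x y]; ring

theorem wedge22_anticomm₂₃ (x y z w : V) : wedge22 ω η x z y w = -wedge22 ω η x y z w := by
  rw [wedge22, wedge22, hω y z, hη y z]; ring

theorem wedge22_anticomm₃₄ (x y z w : V) : wedge22 ω η x y w z = -wedge22 ω η x y z w := by
  rw [wedge22, wedge22, hω z w, hη z w]; ring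

end

theorem wedge43_comp_swap {α : V → V → V → V → R} {β : V → V → V → R}
    (hα₁ : ∀ x y z w, α y x z w = -α x y z w) (hα₂ : ∀ x y z w, α x z y w = -α x y z w)
    (hα₃ : ∀ x y z w, α x y w z = -α x y z w)
    (hβ₁ : ∀ x y z, β y x z = -β x y z) (hβ₂ : ∀ x y z, β x z y = -β x y z)
    (c : Fin 7 → V) (i : Fin 6) :
    wedge43 α β (c ∘ swap i.castSucc i.succ) = -wedge43 α β c := by
  -- antisymmetry oriented by the index order, so that `simp` terminates
  have a₁ : ∀ i j : Fin 7, i < j → ∀ z w, α (c j) (c i) z w = -α (c i) (c j) z w :=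
    fun _ _ _ => hα₁ _ _
  have a₂ : ∀ i j : Fin 7, i < j → ∀ x w, α x (c j) (c i) w = -α x (c i) (c j) w :=
    fun _ _ _ x => hα₂ x _ _
  have a₃ : ∀ i j : Fin 7, i < j → ∀ x y, α x y (c j) (c i) = -α x y (c i) (c j) :=
    fun _ _ _ x y => hα₃ x y _ _
  have b₁ : ∀ i j : Fin 7, i < j → ∀ z, β (c j) (c i) z = -β (c i) (c j) z :=
    fun _ _ _ => hβ₁ _ _
  have b₂ : ∀ i j : Fin 7, i < j → ∀ x, β x (c j) (c i) = -β x (c i) (c j) :=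
    fun _ _ _ x => hβ₂ x _ _
  fin_cases i <;>
  · simp only [wedge43, Function.comp_apply, swap_apply_def, Fin.isValue, Fin.reduceFinMk,
      Fin.reduceCastSucc, Fin.reduceSucc, Fin.reduceEq, Fin.reduceLT, ↓reduceIte,
      a₁, a₂, a₃, b₁, b₂]
    ring

end Wedge

section Bryant

variable {R V : Type*} [CommRing R] [AddCommGroup V] [Module R V]
  (φ : V →ₗ[R] V →ₗ[R] V →ₗ[R] R)

/-- `(u ⌟ φ) ∧ (v ⌟ φ) ∧ φ` evaluated at `c`. -/
def bryantFun (u v : V) (c : Fin 7 → V) : R :=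
  wedge43 (wedge22 (φ u · ·) (φ v · ·)) (φ · · ·) c

theorem bryantFun_update_zero_add (u v : V) (c : Fin 7 → V) (x y : V) :
    bryantFun φ u v (Function.update c 0 (x + y)) =
      bryantFun φ u v (Function.update c 0 x) + bryantFun φ u v (Function.update c 0 y) := by
  simp only [bryantFun, wedge43, wedge22, Function.update_self, ne_eq, Fin.reduceEq,
    not_false_eq_true, Function.update_of_ne, map_add, LinearMap.add_apply]
  ring

theorem bryantFun_update_zero_smul (u v : V) (c : Fin 7 → V) (r : R) (x : V) :
    bryantFun φ u v (Function.update c 0 (r • x)) =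
      r • bryantFun φ u v (Function.update c 0 x) := by
  simp only [bryantFun, wedge43, wedge22, Function.update_self, ne_eq, Fin.reduceEq,
    not_false_eq_true, Function.update_of_ne, map_smul, LinearMap.smul_apply, smul_eq_mul]
  ring

variable {φ}

theorem bryantFun_map {A : V →ₗ[R] V} (hA : ∀ x y z, φ (A x) (A y) (A z) = φ x y z)
    (u v : V) (c : Fin 7 → V) : bryantFun φ (A u) (A v) (A ∘ c) = bryantFun φ u v c := by
  simp [bryantFun, wedge43, wedge22, hA]

variable (h₁₂ : ∀ x y z, φ y x z = -φ x y z) (h₂₃ : ∀ x y z, φ x z y = -φ x y z)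
include h₁₂ h₂₃

theorem bryantFun_comp_swap (u v : V) (c : Fin 7 → V) (i : Fin 6) :
    bryantFun φ u v (c ∘ swap i.castSucc i.succ) = -bryantFun φ u v c :=
  wedge43_comp_swap (wedge22_anticomm₁₂ (h₂₃ u) (h₂₃ v)) (wedge22_anticomm₂₃ (h₂₃ u) (h₂₃ v))
    (wedge22_anticomm₃₄ (h₂₃ u) (h₂₃ v)) h₁₂ h₂₃ c i

variable (φ) in
def bryantForm [IsAddTorsionFree R] (u v : V) : V [⋀^Fin 7]→ₗ[R] R :=
  .ofComp_swap (bryantFun φ u v) (bryantFun_update_zero_add φ u v)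
    (bryantFun_update_zero_smul φ u v) (bryantFun_comp_swap h₁₂ h₂₃ u v)

theorem det_mul_bryantFun_map_basis [IsAddTorsionFree R] {A : V →ₗ[R] V}
    (hA : ∀ x y z, φ (A x) (A y) (A z) = φ x y z) (e : Module.Basis (Fin 7) R V) (u v : V) :
    LinearMap.det A * bryantFun φ (A u) (A v) e = bryantFun φ u v e := by
  rw [← bryantFun_map hA u v e]
  exact ((bryantForm φ h₁₂ h₂₃ (A u) (A v)).map_linearMap_comp_basis e A).symm

end Bryant

section G2

local notation "ℝ⁷" => Fin 7 → ℝ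

theorem e3_apply (i j k : Fin 7) (u v w : ℝ⁷) :
    e3 i j k u v w = u i * v j * w k - u i * v k * w j - u j * v i * w k + u j * v k * w i
      + u k * v i * w j - u k * v j * w i := by
  simp [e3, det_fin_three]

theorem phi0_anticomm₁₂ (x y z : ℝ⁷) : phi0 y x z = -phi0 x y z := by
  simp only [phi0, e3_apply]; ring

theorem phi0_anticomm₂₃ (x y z : ℝ⁷) : phi0 x z y = -phi0 x y z := by
  simp only [phi0, e3_apply]; ring

def phi0Trilinear : ℝ⁷ →ₗ[ℝ] ℝ⁷ →ₗ[ℝ] ℝ⁷ →ₗ[ℝ] ℝ where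
  toFun u := LinearMap.mk₂ ℝ (phi0 u)
    (fun _ _ _ ↦ by simp only [phi0, e3_apply, Pi.add_apply]; ring)
    (fun _ _ _ ↦ by simp only [phi0, e3_apply, Pi.smul_apply, smul_eq_mul]; ring)
    (fun _ _ _ ↦ by simp only [phi0, e3_apply, Pi.add_apply]; ring)
    (fun _ _ _ ↦ by simp only [phi0, e3_apply, Pi.smul_apply, smul_eq_mul]; ring)
  map_add' _ _ := by
    refine LinearMap.ext₂ fun _ _ ↦ ?_
    simp only [LinearMap.mk₂_apply, LinearMap.add_apply, phi0, e3_apply, Pi.add_apply]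
    ring
  map_smul' _ _ := by
    refine LinearMap.ext₂ fun _ _ ↦ ?_
    simp only [LinearMap.mk₂_apply, LinearMap.smul_apply, phi0, e3_apply, Pi.smul_apply,
      smul_eq_mul, RingHom.id_apply]
    ring

@[simp]
theorem phi0Trilinear_apply (u v w : ℝ⁷) : phi0Trilinear u v w = phi0 u v w := rfl

def cross7 (u v : ℝ⁷) : ℝ⁷ := fun k ↦ phi0 u v (Pi.single k 1)

theorem cross7_dotProduct (u v w : ℝ⁷) : cross7 u v ⬝ᵥ w = phi0 u v w := by
  simp only [cross7, dotProduct, Fin.sum_univ_seven, phi0, e3_apply, Pi.single_apply, Fin.isValue,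
    Fin.reduceEq, ↓reduceIte]
  ring

theorem cross7_dotProduct_self (u v : ℝ⁷) :
    cross7 u v ⬝ᵥ cross7 u v = (u ⬝ᵥ u) * (v ⬝ᵥ v) - (u ⬝ᵥ v) ^ 2 := by
  simp only [cross7, dotProduct, Fin.sum_univ_seven, phi0, e3_apply, Pi.single_apply, Fin.isValue,
    Fin.reduceEq, ↓reduceIte]
  ring

theorem bryantFun_phi0_basisFun (u v : ℝ⁷) :
    bryantFun phi0Trilinear u v (Pi.basisFun ℝ (Fin 7)) = 6 * (u ⬝ᵥ v) := by
  simp only [bryantFun, wedge43, wedge22, Pi.basisFun_apply, phi0Trilinear_apply, phi0, e3_apply,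
    Pi.single_apply, Fin.isValue, Fin.reduceEq, ↓reduceIte, dotProduct, Fin.sum_univ_seven]
  ring

theorem e4_eq_e3 (i j k l : Fin 7) (u v w x : ℝ⁷) :
    e4 i j k l u v w x = u i * e3 j k l v w x - u j * e3 i k l v w x + u k * e3 i j l v w x
      - u l * e3 i j k v w x := by
  rw [e4, det_succ_row_zero, Fin.sum_univ_four]
  simp only [e3, det_fin_three, submatrix_apply, of_apply, Fin.succAbove, cons_val', cons_val_zero,
    cons_val_one, cons_val, cons_val_fin_one, Fin.isValue, Fin.reduceCastSucc, Fin.reduceSucc,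
    Fin.reduceLT, ↓reduceIte, Fin.coe_ofNat_eq_mod]
  ring

theorem psi0_eq_cross7_dotProduct (u v w x : ℝ⁷) :
    psi0 u v w x = cross7 u v ⬝ᵥ cross7 w x - ((u ⬝ᵥ w) * (v ⬝ᵥ x) - (u ⬝ᵥ x) * (v ⬝ᵥ w)) := by
  simp only [psi0, e4_eq_e3, cross7, dotProduct, Fin.sum_univ_seven, phi0, e3_apply,
    Pi.single_apply, Fin.isValue, Fin.reduceEq, ↓reduceIte]
  ring

def PreservesPhi0 (A : ℝ⁷ →ₗ[ℝ] ℝ⁷) : Prop :=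
  ∀ u v w, phi0 (A u) (A v) (A w) = phi0 u v w

namespace PreservesPhi0

variable {A : ℝ⁷ →ₗ[ℝ] ℝ⁷} (hA : PreservesPhi0 A)
include hA

theorem det_mul_dotProduct_map_map (u v : ℝ⁷) : LinearMap.det A * (A u ⬝ᵥ A v) = u ⬝ᵥ v := by
  have h := det_mul_bryantFun_map_basis (φ := phi0Trilinear) phi0_anticomm₁₂ phi0_anticomm₂₃ hA
    (Pi.basisFun ℝ (Fin 7)) u v
  rw [bryantFun_phi0_basisFun, bryantFun_phi0_basisFun] at h
  linarith

theorem injective : Function.Injective A := by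
  refine (injective_iff_map_eq_zero A).mpr fun x hx ↦ ?_
  have h := hA.det_mul_dotProduct_map_map x x
  rwa [hx, zero_dotProduct, mul_zero, eq_comm, dotProduct_self_eq_zero] at h

theorem cross7_map_map_eq_det_smul (u v : ℝ⁷) :
    cross7 (A u) (A v) = LinearMap.det A • A (cross7 u v) := by
  refine dotProduct_eq _ _ fun w ↦ ?_
  obtain ⟨w, rfl⟩ := LinearMap.injective_iff_surjective.mp hA.injective w
  rw [cross7_dotProduct, hA, smul_dotProduct, smul_eq_mul, hA.det_mul_dotProduct_map_map,
    cross7_dotProduct]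

theorem det_pow_three_mul_dotProduct_cross7 (u v : ℝ⁷) :
    LinearMap.det A ^ 3 * (cross7 u v ⬝ᵥ cross7 u v) = cross7 u v ⬝ᵥ cross7 u v := by
  have hlagrange := cross7_dotProduct_self (A u) (A v)
  simp only [hA.cross7_map_map_eq_det_smul, smul_dotProduct, dotProduct_smul, smul_eq_mul]
    at hlagrange
  linear_combination LinearMap.det A ^ 2 * hlagrange
    - LinearMap.det A ^ 3 * hA.det_mul_dotProduct_map_map (cross7 u v) (cross7 u v)
    + LinearMap.det A * (A v ⬝ᵥ A v) * hA.det_mul_dotProduct_map_map u u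
    + (u ⬝ᵥ u) * hA.det_mul_dotProduct_map_map v v
    - (LinearMap.det A * (A u ⬝ᵥ A v) + u ⬝ᵥ v) * hA.det_mul_dotProduct_map_map u v
    - cross7_dotProduct_self u v

theorem det_eq_one : LinearMap.det A = 1 := by
  have h := hA.det_pow_three_mul_dotProduct_cross7 (Pi.single 0 1) (Pi.single 1 1)
  rw [cross7_dotProduct_self] at h
  simp only [Fin.isValue, dotProduct_single, Pi.single_eq_same, mul_one, ne_eq, one_ne_zero,
    not_false_eq_true, Pi.single_eq_of_ne, OfNat.ofNat_ne_zero, zero_pow, sub_zero] at h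
  exact (Odd.pow_inj (by decide)).mp (h.trans (one_pow 3).symm)

theorem dotProduct_map_map (u v : ℝ⁷) : A u ⬝ᵥ A v = u ⬝ᵥ v := by
  simpa [hA.det_eq_one] using hA.det_mul_dotProduct_map_map u v

theorem cross7_map_map (u v : ℝ⁷) : cross7 (A u) (A v) = A (cross7 u v) := by
  rw [hA.cross7_map_map_eq_det_smul, hA.det_eq_one, one_smul]

end PreservesPhi0

end G2

/-- Any linear map preserving `φ₀` also preserves its Hodge dual `ψ₀ = *φ₀`. -/
theorem stmt15 (A : (Fin 7 → ℝ) →ₗ[ℝ] (Fin 7 → ℝ))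
    (hA : ∀ u v w : Fin 7 → ℝ, phi0 (A u) (A v) (A w) = phi0 u v w) :
    ∀ u v w x : Fin 7 → ℝ, psi0 (A u) (A v) (A w) (A x) = psi0 u v w x := by
  intro u v w x
  have hA : PreservesPhi0 A := hA
  simp only [psi0_eq_cross7_dotProduct, hA.cross7_map_map, hA.dotProduct_map_map]
end

section
/- The set 𝔤₂ := {X ∈ End(ℝ⁷) : φ₀(Xu, v, w) + φ₀(u, Xv, w) + φ₀(u, v, Xw) = 0 for all u, v, w ∈ ℝ⁷} (the Lie algebra of the stabilizer G₂ of φ₀) is an ℝ-linear subspace of End(ℝ⁷) of dimension 14. -/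
@[simp] lemma fv0 : ((0:Fin 7):ℕ) = 0 := rfl
@[simp] lemma fv1 : ((1:Fin 7):ℕ) = 1 := rfl
@[simp] lemma fv2 : ((2:Fin 7):ℕ) = 2 := rfl
@[simp] lemma fv3 : ((3:Fin 7):ℕ) = 3 := rfl
@[simp] lemma fv4 : ((4:Fin 7):ℕ) = 4 := rfl
@[simp] lemma fv5 : ((5:Fin 7):ℕ) = 5 := rfl
@[simp] lemma fv6 : ((6:Fin 7):ℕ) = 6 := rfl
@[simp] lemma fw0 : ((0:Fin 14):ℕ) = 0 := rfl
@[simp] lemma fw1 : ((1:Fin 14):ℕ) = 1 := rfl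
@[simp] lemma fw2 : ((2:Fin 14):ℕ) = 2 := rfl
@[simp] lemma fw3 : ((3:Fin 14):ℕ) = 3 := rfl
@[simp] lemma fw4 : ((4:Fin 14):ℕ) = 4 := rfl
@[simp] lemma fw5 : ((5:Fin 14):ℕ) = 5 := rfl
@[simp] lemma fw6 : ((6:Fin 14):ℕ) = 6 := rfl
@[simp] lemma fw7 : ((7:Fin 14):ℕ) = 7 := rfl
@[simp] lemma fw8 : ((8:Fin 14):ℕ) = 8 := rfl
@[simp] lemma fw9 : ((9:Fin 14):ℕ) = 9 := rfl
@[simp] lemma fw10 : ((10:Fin 14):ℕ) = 10 := rfl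
@[simp] lemma fw11 : ((11:Fin 14):ℕ) = 11 := rfl
@[simp] lemma fw12 : ((12:Fin 14):ℕ) = 12 := rfl
@[simp] lemma fw13 : ((13:Fin 14):ℕ) = 13 := rfl

def msolFun (c : Fin 14 → ℝ) : Matrix (Fin 7) (Fin 7) ℝ :=
  Matrix.of fun i j =>
    if i.1 = 0 then (if j.1 = 1 then -c 7 - c 11 else if j.1 = 2 then -c 6 + c 12 else if j.1 = 3 then c 5 + c 9 else if j.1 = 4 then c 4 - c 10 else if j.1 = 5 then -c 3 else if j.1 = 6 then -c 8 else 0)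
    else
    if i.1 = 1 then (if j.1 = 0 then c 7 + c 11 else if j.1 = 2 then c 2 + c 13 else if j.1 = 3 then -c 1 - c 8 else if j.1 = 4 then -c 0 else if j.1 = 5 then -c 4 else if j.1 = 6 then -c 9 else 0)
    else
    if i.1 = 2 then (if j.1 = 0 then c 6 - c 12 else if j.1 = 1 then -c 2 - c 13 else if j.1 = 3 then c 0 - c 3 else if j.1 = 4 then -c 1 else if j.1 = 5 then -c 5 else if j.1 = 6 then -c 10 else 0)
    else
    if i.1 = 3 then (if j.1 = 0 then -c 5 - c 9 else if j.1 = 1 then c 1 + c 8 else if j.1 = 2 then -c 0 + c 3 else if j.1 = 4 then -c 2 else if j.1 = 5 then -c 6 else if j.1 = 6 then -c 11 else 0)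
    else
    if i.1 = 4 then (if j.1 = 0 then -c 4 + c 10 else if j.1 = 1 then c 0 else if j.1 = 2 then c 1 else if j.1 = 3 then c 2 else if j.1 = 5 then -c 7 else if j.1 = 6 then -c 12 else 0)
    else
    if i.1 = 5 then (if j.1 = 0 then c 3 else if j.1 = 1 then c 4 else if j.1 = 2 then c 5 else if j.1 = 3 then c 6 else if j.1 = 4 then c 7 else if j.1 = 6 then -c 13 else 0)
    else
    (if j.1 = 0 then c 8 else if j.1 = 1 then c 9 else if j.1 = 2 then c 10 else if j.1 = 3 then c 11 else if j.1 = 4 then c 12 else if j.1 = 5 then c 13 else 0)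

set_option maxHeartbeats 0 in
def Msol : (Fin 14 → ℝ) →ₗ[ℝ] Matrix (Fin 7) (Fin 7) ℝ where
  toFun := msolFun
  map_add' c d := by
    have fin7 : ∀ i : Fin 7, i = 0 ∨ i = 1 ∨ i = 2 ∨ i = 3 ∨ i = 4 ∨ i = 5 ∨ i = 6 := by decide
    ext i j
    rcases fin7 i with rfl|rfl|rfl|rfl|rfl|rfl|rfl <;>
      rcases fin7 j with rfl|rfl|rfl|rfl|rfl|rfl|rfl <;>
      simp only [msolFun, Matrix.of_apply, Matrix.add_apply, Pi.add_apply,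
        fv0, fv1, fv2, fv3, fv4, fv5, fv6, Nat.reduceEqDiff, reduceIte] <;>
      ring
  map_smul' r c := by
    have fin7 : ∀ i : Fin 7, i = 0 ∨ i = 1 ∨ i = 2 ∨ i = 3 ∨ i = 4 ∨ i = 5 ∨ i = 6 := by decide
    ext i j
    rcases fin7 i with rfl|rfl|rfl|rfl|rfl|rfl|rfl <;>
      rcases fin7 j with rfl|rfl|rfl|rfl|rfl|rfl|rfl <;>
      simp only [msolFun, Matrix.of_apply, Matrix.smul_apply, Pi.smul_apply, smul_eq_mul,
        RingHom.id_apply, fv0, fv1, fv2, fv3, fv4, fv5, fv6, Nat.reduceEqDiff, reduceIte] <;>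
      ring

def Gmap : (Fin 14 → ℝ) →ₗ[ℝ] ((Fin 7 → ℝ) →ₗ[ℝ] (Fin 7 → ℝ)) :=
  (Matrix.toLin' : Matrix (Fin 7) (Fin 7) ℝ ≃ₗ[ℝ] _).toLinearMap.comp Msol

set_option maxHeartbeats 0 in
lemma key (c : Fin 14 → ℝ) (u v w : Fin 7 → ℝ) :
    phi0 ((msolFun c).mulVec u) v w + phi0 u ((msolFun c).mulVec v) w
      + phi0 u v ((msolFun c).mulVec w) = 0 := by
  simp only [phi0, e3, Matrix.det_fin_three, Matrix.cons_val', Matrix.cons_val_zero,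
    Matrix.cons_val_one, Matrix.head_cons, Matrix.empty_val', Matrix.cons_val_fin_one,
    Matrix.head_fin_const]
  simp [msolFun, Matrix.mulVec, dotProduct, Fin.sum_univ_seven]
  ring

set_option maxHeartbeats 0 in
/-- The Lie algebra `𝔤₂` of infinitesimal symmetries of `φ₀` is a linear subspace
of `End(ℝ⁷)` of dimension `14`. -/
theorem stmt17 :
    ∃ S : Submodule ℝ ((Fin 7 → ℝ) →ₗ[ℝ] (Fin 7 → ℝ)),
      (S : Set ((Fin 7 → ℝ) →ₗ[ℝ] (Fin 7 → ℝ))) =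
        {X | ∀ u v w : Fin 7 → ℝ,
          phi0 (X u) v w + phi0 u (X v) w + phi0 u v (X w) = 0} ∧
      Module.finrank ℝ ↥S = 14 := by
  have fin7 : ∀ i : Fin 7, i = 0 ∨ i = 1 ∨ i = 2 ∨ i = 3 ∨ i = 4 ∨ i = 5 ∨ i = 6 := by decide
  have fin14 : ∀ k : Fin 14, k = 0 ∨ k = 1 ∨ k = 2 ∨ k = 3 ∨ k = 4 ∨ k = 5 ∨ k = 6 ∨ k = 7 ∨
      k = 8 ∨ k = 9 ∨ k = 10 ∨ k = 11 ∨ k = 12 ∨ k = 13 := by decide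
  refine ⟨LinearMap.range Gmap, ?_, ?_⟩
  · ext X
    simp only [SetLike.mem_coe, LinearMap.mem_range, Set.mem_setOf_eq]
    constructor
    · rintro ⟨c, rfl⟩ u v w
      have hg : ∀ z, Gmap c z = (msolFun c).mulVec z := fun z => by
        simp only [Gmap, LinearMap.coe_comp, Function.comp_apply, LinearEquiv.coe_coe,
          Matrix.toLin'_apply]
        rfl
      rw [hg, hg, hg]
      exact key c u v w
    · intro hX
      set B := LinearMap.toMatrix' X with hBdef
      have hB : ∀ z, X z = B.mulVec z := fun z => by
        rw [hBdef, ← Matrix.toLin'_apply, Matrix.toLin'_toMatrix']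
      have h0 : B 0 0 + B 1 1 + B 2 2 = 0 := by
        have h := hX (fun p => if p.1 = 0 then 1 else 0) (fun p => if p.1 = 1 then 1 else 0)
          (fun p => if p.1 = 2 then 1 else 0)
        rw [hB, hB, hB] at h
        simp [phi0, e3, Matrix.det_fin_three, Matrix.mulVec, dotProduct,
          Matrix.vecHead, Matrix.vecTail, Fin.sum_univ_seven] at h
        linarith
      have h1 : B 2 3 - B 4 1 + B 5 0 = 0 := by
        have h := hX (fun p => if p.1 = 0 then 1 else 0) (fun p => if p.1 = 1 then 1 else 0)
          (fun p => if p.1 = 3 then 1 else 0)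
        rw [hB, hB, hB] at h
        simp [phi0, e3, Matrix.det_fin_three, Matrix.mulVec, dotProduct,
          Matrix.vecHead, Matrix.vecTail, Fin.sum_univ_seven] at h
        linarith
      have h2 : B 2 4 + B 3 1 - B 6 0 = 0 := by
        have h := hX (fun p => if p.1 = 0 then 1 else 0) (fun p => if p.1 = 1 then 1 else 0)
          (fun p => if p.1 = 4 then 1 else 0)
        rw [hB, hB, hB] at h
        simp [phi0, e3, Matrix.det_fin_three, Matrix.mulVec, dotProduct,
          Matrix.vecHead, Matrix.vecTail, Fin.sum_univ_seven] at h
        linarith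
      have h3 : B 2 5 - B 3 0 - B 6 1 = 0 := by
        have h := hX (fun p => if p.1 = 0 then 1 else 0) (fun p => if p.1 = 1 then 1 else 0)
          (fun p => if p.1 = 5 then 1 else 0)
        rw [hB, hB, hB] at h
        simp [phi0, e3, Matrix.det_fin_three, Matrix.mulVec, dotProduct,
          Matrix.vecHead, Matrix.vecTail, Fin.sum_univ_seven] at h
        linarith
      have h4 : B 2 6 + B 4 0 + B 5 1 = 0 := by
        have h := hX (fun p => if p.1 = 0 then 1 else 0) (fun p => if p.1 = 1 then 1 else 0)
          (fun p => if p.1 = 6 then 1 else 0)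
        rw [hB, hB, hB] at h
        simp [phi0, e3, Matrix.det_fin_three, Matrix.mulVec, dotProduct,
          Matrix.vecHead, Matrix.vecTail, Fin.sum_univ_seven] at h
        linarith
      have h5 : -B 1 3 - B 4 2 - B 6 0 = 0 := by
        have h := hX (fun p => if p.1 = 0 then 1 else 0) (fun p => if p.1 = 2 then 1 else 0)
          (fun p => if p.1 = 3 then 1 else 0)
        rw [hB, hB, hB] at h
        simp [phi0, e3, Matrix.det_fin_three, Matrix.mulVec, dotProduct,
          Matrix.vecHead, Matrix.vecTail, Fin.sum_univ_seven] at h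
        linarith
      have h6 : -B 1 4 + B 3 2 - B 5 0 = 0 := by
        have h := hX (fun p => if p.1 = 0 then 1 else 0) (fun p => if p.1 = 2 then 1 else 0)
          (fun p => if p.1 = 4 then 1 else 0)
        rw [hB, hB, hB] at h
        simp [phi0, e3, Matrix.det_fin_three, Matrix.mulVec, dotProduct,
          Matrix.vecHead, Matrix.vecTail, Fin.sum_univ_seven] at h
        linarith
      have h7 : -B 1 5 + B 4 0 - B 6 2 = 0 := by
        have h := hX (fun p => if p.1 = 0 then 1 else 0) (fun p => if p.1 = 2 then 1 else 0)
          (fun p => if p.1 = 5 then 1 else 0)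
        rw [hB, hB, hB] at h
        simp [phi0, e3, Matrix.det_fin_three, Matrix.mulVec, dotProduct,
          Matrix.vecHead, Matrix.vecTail, Fin.sum_univ_seven] at h
        linarith
      have h8 : -B 1 6 + B 3 0 + B 5 2 = 0 := by
        have h := hX (fun p => if p.1 = 0 then 1 else 0) (fun p => if p.1 = 2 then 1 else 0)
          (fun p => if p.1 = 6 then 1 else 0)
        rw [hB, hB, hB] at h
        simp [phi0, e3, Matrix.det_fin_three, Matrix.mulVec, dotProduct,
          Matrix.vecHead, Matrix.vecTail, Fin.sum_univ_seven] at h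
        linarith
      have h9 : B 0 0 + B 3 3 + B 4 4 = 0 := by
        have h := hX (fun p => if p.1 = 0 then 1 else 0) (fun p => if p.1 = 3 then 1 else 0)
          (fun p => if p.1 = 4 then 1 else 0)
        rw [hB, hB, hB] at h
        simp [phi0, e3, Matrix.det_fin_three, Matrix.mulVec, dotProduct,
          Matrix.vecHead, Matrix.vecTail, Fin.sum_univ_seven] at h
        linarith
      have h10 : B 1 0 + B 4 5 - B 6 3 = 0 := by
        have h := hX (fun p => if p.1 = 0 then 1 else 0) (fun p => if p.1 = 3 then 1 else 0)
          (fun p => if p.1 = 5 then 1 else 0)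
        rw [hB, hB, hB] at h
        simp [phi0, e3, Matrix.det_fin_three, Matrix.mulVec, dotProduct,
          Matrix.vecHead, Matrix.vecTail, Fin.sum_univ_seven] at h
        linarith
      have h11 : -B 2 0 + B 4 6 + B 5 3 = 0 := by
        have h := hX (fun p => if p.1 = 0 then 1 else 0) (fun p => if p.1 = 3 then 1 else 0)
          (fun p => if p.1 = 6 then 1 else 0)
        rw [hB, hB, hB] at h
        simp [phi0, e3, Matrix.det_fin_three, Matrix.mulVec, dotProduct,
          Matrix.vecHead, Matrix.vecTail, Fin.sum_univ_seven] at h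
        linarith
      have h12 : -B 2 0 - B 3 5 - B 6 4 = 0 := by
        have h := hX (fun p => if p.1 = 0 then 1 else 0) (fun p => if p.1 = 4 then 1 else 0)
          (fun p => if p.1 = 5 then 1 else 0)
        rw [hB, hB, hB] at h
        simp [phi0, e3, Matrix.det_fin_three, Matrix.mulVec, dotProduct,
          Matrix.vecHead, Matrix.vecTail, Fin.sum_univ_seven] at h
        linarith
      have h13 : -B 1 0 - B 3 6 + B 5 4 = 0 := by
        have h := hX (fun p => if p.1 = 0 then 1 else 0) (fun p => if p.1 = 4 then 1 else 0)
          (fun p => if p.1 = 6 then 1 else 0)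
        rw [hB, hB, hB] at h
        simp [phi0, e3, Matrix.det_fin_three, Matrix.mulVec, dotProduct,
          Matrix.vecHead, Matrix.vecTail, Fin.sum_univ_seven] at h
        linarith
      have h14 : B 0 0 + B 5 5 + B 6 6 = 0 := by
        have h := hX (fun p => if p.1 = 0 then 1 else 0) (fun p => if p.1 = 5 then 1 else 0)
          (fun p => if p.1 = 6 then 1 else 0)
        rw [hB, hB, hB] at h
        simp [phi0, e3, Matrix.det_fin_three, Matrix.mulVec, dotProduct,
          Matrix.vecHead, Matrix.vecTail, Fin.sum_univ_seven] at h
        linarith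
      have h15 : B 0 3 - B 5 2 - B 6 1 = 0 := by
        have h := hX (fun p => if p.1 = 1 then 1 else 0) (fun p => if p.1 = 2 then 1 else 0)
          (fun p => if p.1 = 3 then 1 else 0)
        rw [hB, hB, hB] at h
        simp [phi0, e3, Matrix.det_fin_three, Matrix.mulVec, dotProduct,
          Matrix.vecHead, Matrix.vecTail, Fin.sum_univ_seven] at h
        linarith
      have h16 : B 0 4 - B 5 1 + B 6 2 = 0 := by
        have h := hX (fun p => if p.1 = 1 then 1 else 0) (fun p => if p.1 = 2 then 1 else 0)
          (fun p => if p.1 = 4 then 1 else 0)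
        rw [hB, hB, hB] at h
        simp [phi0, e3, Matrix.det_fin_three, Matrix.mulVec, dotProduct,
          Matrix.vecHead, Matrix.vecTail, Fin.sum_univ_seven] at h
        linarith
      have h17 : B 0 5 + B 3 2 + B 4 1 = 0 := by
        have h := hX (fun p => if p.1 = 1 then 1 else 0) (fun p => if p.1 = 2 then 1 else 0)
          (fun p => if p.1 = 5 then 1 else 0)
        rw [hB, hB, hB] at h
        simp [phi0, e3, Matrix.det_fin_three, Matrix.mulVec, dotProduct,
          Matrix.vecHead, Matrix.vecTail, Fin.sum_univ_seven] at h
        linarith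
      have h18 : B 0 6 + B 3 1 - B 4 2 = 0 := by
        have h := hX (fun p => if p.1 = 1 then 1 else 0) (fun p => if p.1 = 2 then 1 else 0)
          (fun p => if p.1 = 6 then 1 else 0)
        rw [hB, hB, hB] at h
        simp [phi0, e3, Matrix.det_fin_three, Matrix.mulVec, dotProduct,
          Matrix.vecHead, Matrix.vecTail, Fin.sum_univ_seven] at h
        linarith
      have h19 : B 0 1 + B 5 4 + B 6 3 = 0 := by
        have h := hX (fun p => if p.1 = 1 then 1 else 0) (fun p => if p.1 = 3 then 1 else 0)
          (fun p => if p.1 = 4 then 1 else 0)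
        rw [hB, hB, hB] at h
        simp [phi0, e3, Matrix.det_fin_three, Matrix.mulVec, dotProduct,
          Matrix.vecHead, Matrix.vecTail, Fin.sum_univ_seven] at h
        linarith
      have h20 : B 1 1 + B 3 3 + B 5 5 = 0 := by
        have h := hX (fun p => if p.1 = 1 then 1 else 0) (fun p => if p.1 = 3 then 1 else 0)
          (fun p => if p.1 = 5 then 1 else 0)
        rw [hB, hB, hB] at h
        simp [phi0, e3, Matrix.det_fin_three, Matrix.mulVec, dotProduct,
          Matrix.vecHead, Matrix.vecTail, Fin.sum_univ_seven] at h
        linarith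
      have h21 : -B 2 1 - B 4 3 + B 5 6 = 0 := by
        have h := hX (fun p => if p.1 = 1 then 1 else 0) (fun p => if p.1 = 3 then 1 else 0)
          (fun p => if p.1 = 6 then 1 else 0)
        rw [hB, hB, hB] at h
        simp [phi0, e3, Matrix.det_fin_three, Matrix.mulVec, dotProduct,
          Matrix.vecHead, Matrix.vecTail, Fin.sum_univ_seven] at h
        linarith
      have h22 : -B 2 1 + B 3 4 - B 6 5 = 0 := by
        have h := hX (fun p => if p.1 = 1 then 1 else 0) (fun p => if p.1 = 4 then 1 else 0)
          (fun p => if p.1 = 5 then 1 else 0)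
        rw [hB, hB, hB] at h
        simp [phi0, e3, Matrix.det_fin_three, Matrix.mulVec, dotProduct,
          Matrix.vecHead, Matrix.vecTail, Fin.sum_univ_seven] at h
        linarith
      have h23 : -B 1 1 - B 4 4 - B 6 6 = 0 := by
        have h := hX (fun p => if p.1 = 1 then 1 else 0) (fun p => if p.1 = 4 then 1 else 0)
          (fun p => if p.1 = 6 then 1 else 0)
        rw [hB, hB, hB] at h
        simp [phi0, e3, Matrix.det_fin_three, Matrix.mulVec, dotProduct,
          Matrix.vecHead, Matrix.vecTail, Fin.sum_univ_seven] at h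
        linarith
      have h24 : B 0 1 - B 3 6 - B 4 5 = 0 := by
        have h := hX (fun p => if p.1 = 1 then 1 else 0) (fun p => if p.1 = 5 then 1 else 0)
          (fun p => if p.1 = 6 then 1 else 0)
        rw [hB, hB, hB] at h
        simp [phi0, e3, Matrix.det_fin_three, Matrix.mulVec, dotProduct,
          Matrix.vecHead, Matrix.vecTail, Fin.sum_univ_seven] at h
        linarith
      have h25 : B 0 2 + B 5 3 - B 6 4 = 0 := by
        have h := hX (fun p => if p.1 = 2 then 1 else 0) (fun p => if p.1 = 3 then 1 else 0)
          (fun p => if p.1 = 4 then 1 else 0)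
        rw [hB, hB, hB] at h
        simp [phi0, e3, Matrix.det_fin_three, Matrix.mulVec, dotProduct,
          Matrix.vecHead, Matrix.vecTail, Fin.sum_univ_seven] at h
        linarith
      have h26 : B 1 2 - B 4 3 - B 6 5 = 0 := by
        have h := hX (fun p => if p.1 = 2 then 1 else 0) (fun p => if p.1 = 3 then 1 else 0)
          (fun p => if p.1 = 5 then 1 else 0)
        rw [hB, hB, hB] at h
        simp [phi0, e3, Matrix.det_fin_three, Matrix.mulVec, dotProduct,
          Matrix.vecHead, Matrix.vecTail, Fin.sum_univ_seven] at h
        linarith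
      have h27 : -B 2 2 - B 3 3 - B 6 6 = 0 := by
        have h := hX (fun p => if p.1 = 2 then 1 else 0) (fun p => if p.1 = 3 then 1 else 0)
          (fun p => if p.1 = 6 then 1 else 0)
        rw [hB, hB, hB] at h
        simp [phi0, e3, Matrix.det_fin_three, Matrix.mulVec, dotProduct,
          Matrix.vecHead, Matrix.vecTail, Fin.sum_univ_seven] at h
        linarith
      have h28 : -B 2 2 - B 4 4 - B 5 5 = 0 := by
        have h := hX (fun p => if p.1 = 2 then 1 else 0) (fun p => if p.1 = 4 then 1 else 0)
          (fun p => if p.1 = 5 then 1 else 0)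
        rw [hB, hB, hB] at h
        simp [phi0, e3, Matrix.det_fin_three, Matrix.mulVec, dotProduct,
          Matrix.vecHead, Matrix.vecTail, Fin.sum_univ_seven] at h
        linarith
      have h29 : -B 1 2 - B 3 4 - B 5 6 = 0 := by
        have h := hX (fun p => if p.1 = 2 then 1 else 0) (fun p => if p.1 = 4 then 1 else 0)
          (fun p => if p.1 = 6 then 1 else 0)
        rw [hB, hB, hB] at h
        simp [phi0, e3, Matrix.det_fin_three, Matrix.mulVec, dotProduct,
          Matrix.vecHead, Matrix.vecTail, Fin.sum_univ_seven] at h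
        linarith
      have h30 : B 0 2 - B 3 5 + B 4 6 = 0 := by
        have h := hX (fun p => if p.1 = 2 then 1 else 0) (fun p => if p.1 = 5 then 1 else 0)
          (fun p => if p.1 = 6 then 1 else 0)
        rw [hB, hB, hB] at h
        simp [phi0, e3, Matrix.det_fin_three, Matrix.mulVec, dotProduct,
          Matrix.vecHead, Matrix.vecTail, Fin.sum_univ_seven] at h
        linarith
      have h31 : B 0 5 - B 1 4 - B 2 3 = 0 := by
        have h := hX (fun p => if p.1 = 3 then 1 else 0) (fun p => if p.1 = 4 then 1 else 0)
          (fun p => if p.1 = 5 then 1 else 0)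
        rw [hB, hB, hB] at h
        simp [phi0, e3, Matrix.det_fin_three, Matrix.mulVec, dotProduct,
          Matrix.vecHead, Matrix.vecTail, Fin.sum_univ_seven] at h
        linarith
      have h32 : B 0 6 - B 1 3 + B 2 4 = 0 := by
        have h := hX (fun p => if p.1 = 3 then 1 else 0) (fun p => if p.1 = 4 then 1 else 0)
          (fun p => if p.1 = 6 then 1 else 0)
        rw [hB, hB, hB] at h
        simp [phi0, e3, Matrix.det_fin_three, Matrix.mulVec, dotProduct,
          Matrix.vecHead, Matrix.vecTail, Fin.sum_univ_seven] at h
        linarith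
      have h33 : B 0 3 + B 1 6 + B 2 5 = 0 := by
        have h := hX (fun p => if p.1 = 3 then 1 else 0) (fun p => if p.1 = 5 then 1 else 0)
          (fun p => if p.1 = 6 then 1 else 0)
        rw [hB, hB, hB] at h
        simp [phi0, e3, Matrix.det_fin_three, Matrix.mulVec, dotProduct,
          Matrix.vecHead, Matrix.vecTail, Fin.sum_univ_seven] at h
        linarith
      have h34 : B 0 4 + B 1 5 - B 2 6 = 0 := by
        have h := hX (fun p => if p.1 = 4 then 1 else 0) (fun p => if p.1 = 5 then 1 else 0)
          (fun p => if p.1 = 6 then 1 else 0)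
        rw [hB, hB, hB] at h
        simp [phi0, e3, Matrix.det_fin_three, Matrix.mulVec, dotProduct,
          Matrix.vecHead, Matrix.vecTail, Fin.sum_univ_seven] at h
        linarith
      refine ⟨fun k : Fin 14 => if k.1 = 0 then B 4 1 else if k.1 = 1 then B 4 2 else if k.1 = 2 then B 4 3 else if k.1 = 3 then B 5 0 else if k.1 = 4 then B 5 1 else if k.1 = 5 then B 5 2 else if k.1 = 6 then B 5 3 else if k.1 = 7 then B 5 4 else if k.1 = 8 then B 6 0 else if k.1 = 9 then B 6 1 else if k.1 = 10 then B 6 2 else if k.1 = 11 then B 6 3 else if k.1 = 12 then B 6 4 else if k.1 = 13 then B 6 5 else 0, ?_⟩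
      have hMB : msolFun (fun k : Fin 14 => if k.1 = 0 then B 4 1 else if k.1 = 1 then B 4 2 else if k.1 = 2 then B 4 3 else if k.1 = 3 then B 5 0 else if k.1 = 4 then B 5 1 else if k.1 = 5 then B 5 2 else if k.1 = 6 then B 5 3 else if k.1 = 7 then B 5 4 else if k.1 = 8 then B 6 0 else if k.1 = 9 then B 6 1 else if k.1 = 10 then B 6 2 else if k.1 = 11 then B 6 3 else if k.1 = 12 then B 6 4 else if k.1 = 13 then B 6 5 else 0) = B := by
        ext i j
        rcases fin7 i with rfl|rfl|rfl|rfl|rfl|rfl|rfl <;>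
          rcases fin7 j with rfl|rfl|rfl|rfl|rfl|rfl|rfl
        · simp [msolFun]
          linear_combination - (1/3 : ℝ) * h0 - (1/3 : ℝ) * h9 - (1/3 : ℝ) * h14 + (1/6 : ℝ) * h20 - (1/6 : ℝ) * h23 - (1/6 : ℝ) * h27 - (1/6 : ℝ) * h28
        · simp [msolFun]
          linear_combination - h19
        · simp [msolFun]
          linear_combination - h25
        · simp [msolFun]
          linear_combination - h15
        · simp [msolFun]
          linear_combination - h16
        · simp [msolFun]
          linear_combination - (1/2 : ℝ) * h1 + (1/2 : ℝ) * h6 - (1/2 : ℝ) * h17 - (1/2 : ℝ) * h31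
        · simp [msolFun]
          linear_combination (1/2 : ℝ) * h2 + (1/2 : ℝ) * h5 - (1/2 : ℝ) * h18 - (1/2 : ℝ) * h32
        · simp [msolFun]
          linear_combination - (1/2 : ℝ) * h10 + (1/2 : ℝ) * h13 + (1/2 : ℝ) * h19 - (1/2 : ℝ) * h24
        · simp [msolFun]
          linear_combination - (1/3 : ℝ) * h0 + (1/6 : ℝ) * h9 + (1/6 : ℝ) * h14 - (1/3 : ℝ) * h20 + (1/3 : ℝ) * h23 - (1/6 : ℝ) * h27 - (1/6 : ℝ) * h28
        · simp [msolFun]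
          linear_combination - h26
        · simp [msolFun]
          linear_combination h5
        · simp [msolFun]
          linear_combination (1/2 : ℝ) * h1 + (1/2 : ℝ) * h6 - (1/2 : ℝ) * h17 + (1/2 : ℝ) * h31
        · simp [msolFun]
          linear_combination - (1/2 : ℝ) * h4 + (1/2 : ℝ) * h7 + (1/2 : ℝ) * h16 - (1/2 : ℝ) * h34
        · simp [msolFun]
          linear_combination (1/2 : ℝ) * h3 + (1/2 : ℝ) * h8 + (1/2 : ℝ) * h15 - (1/2 : ℝ) * h33
        · simp [msolFun]
          linear_combination (1/2 : ℝ) * h11 + (1/2 : ℝ) * h12 + (1/2 : ℝ) * h25 - (1/2 : ℝ) * h30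
        · simp [msolFun]
          linear_combination (1/2 : ℝ) * h21 + (1/2 : ℝ) * h22 + (1/2 : ℝ) * h26 + (1/2 : ℝ) * h29
        · simp [msolFun]
          linear_combination - (1/3 : ℝ) * h0 + (1/6 : ℝ) * h9 + (1/6 : ℝ) * h14 + (1/6 : ℝ) * h20 - (1/6 : ℝ) * h23 + (1/3 : ℝ) * h27 + (1/3 : ℝ) * h28
        · simp [msolFun]
          linear_combination - h1
        · simp [msolFun]
          linear_combination - (1/2 : ℝ) * h2 + (1/2 : ℝ) * h5 + (1/2 : ℝ) * h18 - (1/2 : ℝ) * h32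
        · simp [msolFun]
          linear_combination - (1/2 : ℝ) * h3 - (1/2 : ℝ) * h8 + (1/2 : ℝ) * h15 - (1/2 : ℝ) * h33
        · simp [msolFun]
          linear_combination - (1/2 : ℝ) * h4 + (1/2 : ℝ) * h7 - (1/2 : ℝ) * h16 + (1/2 : ℝ) * h34
        · simp [msolFun]
          linear_combination (1/2 : ℝ) * h3 - (1/2 : ℝ) * h8 + (1/2 : ℝ) * h15 - (1/2 : ℝ) * h33
        · simp [msolFun]
          linear_combination - (1/2 : ℝ) * h2 - (1/2 : ℝ) * h5 - (1/2 : ℝ) * h18 + (1/2 : ℝ) * h32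
        · simp [msolFun]
          linear_combination (1/2 : ℝ) * h1 - (1/2 : ℝ) * h6 - (1/2 : ℝ) * h17 + (1/2 : ℝ) * h31
        · simp [msolFun]
          linear_combination (1/6 : ℝ) * h0 - (1/3 : ℝ) * h9 + (1/6 : ℝ) * h14 - (1/3 : ℝ) * h20 - (1/6 : ℝ) * h23 + (1/3 : ℝ) * h27 - (1/6 : ℝ) * h28
        · simp [msolFun]
          linear_combination (1/2 : ℝ) * h21 - (1/2 : ℝ) * h22 + (1/2 : ℝ) * h26 + (1/2 : ℝ) * h29
        · simp [msolFun]
          linear_combination - (1/2 : ℝ) * h11 + (1/2 : ℝ) * h12 - (1/2 : ℝ) * h25 + (1/2 : ℝ) * h30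
        · simp [msolFun]
          linear_combination (1/2 : ℝ) * h10 + (1/2 : ℝ) * h13 - (1/2 : ℝ) * h19 + (1/2 : ℝ) * h24
        · simp [msolFun]
          linear_combination - (1/2 : ℝ) * h4 - (1/2 : ℝ) * h7 + (1/2 : ℝ) * h16 - (1/2 : ℝ) * h34
        · simp [msolFun]
        · simp [msolFun]
        · simp [msolFun]
        · simp [msolFun]
          linear_combination (1/6 : ℝ) * h0 - (1/3 : ℝ) * h9 + (1/6 : ℝ) * h14 + (1/6 : ℝ) * h20 + (1/3 : ℝ) * h23 - (1/6 : ℝ) * h27 + (1/3 : ℝ) * h28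
        · simp [msolFun]
          linear_combination - (1/2 : ℝ) * h10 - (1/2 : ℝ) * h13 - (1/2 : ℝ) * h19 + (1/2 : ℝ) * h24
        · simp [msolFun]
          linear_combination - (1/2 : ℝ) * h11 + (1/2 : ℝ) * h12 + (1/2 : ℝ) * h25 - (1/2 : ℝ) * h30
        · simp [msolFun]
        · simp [msolFun]
        · simp [msolFun]
        · simp [msolFun]
        · simp [msolFun]
        · simp [msolFun]
          linear_combination (1/6 : ℝ) * h0 + (1/6 : ℝ) * h9 - (1/3 : ℝ) * h14 - (1/3 : ℝ) * h20 - (1/6 : ℝ) * h23 - (1/6 : ℝ) * h27 + (1/3 : ℝ) * h28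
        · simp [msolFun]
          linear_combination - (1/2 : ℝ) * h21 + (1/2 : ℝ) * h22 + (1/2 : ℝ) * h26 + (1/2 : ℝ) * h29
        · simp [msolFun]
        · simp [msolFun]
        · simp [msolFun]
        · simp [msolFun]
        · simp [msolFun]
        · simp [msolFun]
        · simp [msolFun]
          linear_combination (1/6 : ℝ) * h0 + (1/6 : ℝ) * h9 - (1/3 : ℝ) * h14 + (1/6 : ℝ) * h20 + (1/3 : ℝ) * h23 + (1/3 : ℝ) * h27 - (1/6 : ℝ) * h28
      calc Gmap _ = Matrix.toLin' (msolFun _) := rfl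
        _ = Matrix.toLin' B := by rw [hMB]
        _ = X := by rw [hBdef, Matrix.toLin'_toMatrix']
  · have hM : Function.Injective Msol := by
      apply Function.LeftInverse.injective
        (g := fun A : Matrix (Fin 7) (Fin 7) ℝ => fun k : Fin 14 => if k.1 = 0 then A 4 1 else if k.1 = 1 then A 4 2 else if k.1 = 2 then A 4 3 else if k.1 = 3 then A 5 0 else if k.1 = 4 then A 5 1 else if k.1 = 5 then A 5 2 else if k.1 = 6 then A 5 3 else if k.1 = 7 then A 5 4 else if k.1 = 8 then A 6 0 else if k.1 = 9 then A 6 1 else if k.1 = 10 then A 6 2 else if k.1 = 11 then A 6 3 else if k.1 = 12 then A 6 4 else if k.1 = 13 then A 6 5 else 0)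
      intro c; funext k
      rcases fin14 k with rfl|rfl|rfl|rfl|rfl|rfl|rfl|rfl|rfl|rfl|rfl|rfl|rfl|rfl <;>
        simp [Msol, msolFun]
    have hinj : Function.Injective Gmap := by
      intro a b hab
      apply hM
      apply Matrix.toLin'.injective
      exact hab
    rw [LinearMap.finrank_range_of_inj hinj]
    simp [Module.finrank_fintype_fun_eq_card]
end
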